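/- Let I and J be strongly stable monomial ideals with the same Hilbert function and m_{≤i}(J_j) ≤ m_{≤i}(I_j) for all i, j. If β₁(R/I) = β₁(R/J) (equal total number of minimal generators), then m_{≤i}(I_j) = m_{≤i}(J_j) for all i and j. -/

import Mathlib

/-!
In a strongly stable ideal `I`, every monomial of `𝔪 I` of degree `t + 1` is uniquely `x_m v`
with `v ∈ I_t` and `max v ≤ m` (divide by its last variable; strong stability keeps the quotient
in `I`). Hence `|I_{t+1}| = |G(I)_{t+1}| + ∑_{j=1}^{n} m_{≤j}(I_t)`, and summing over all degrees
up to the generating degree, `β₁(R/I) + ∑_t ∑_j m_{≤j}(I_t)` depends only on the Hilbert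
function. With equal `β₁` and termwise `m_{≤j}(J_t) ≤ m_{≤j}(I_t)`, every term must be equal;
the indices `i = 0` and `i ≥ n` are covered by the Hilbert function alone.
-/

/-- The exponent vector of the monomial `x_j · u / x_i` (exchange move). -/
def exch {n : ℕ} (u : Fin n → ℕ) (i j : Fin n) : Fin n → ℕ :=
  fun k => if k = i then u i - 1 else if k = j then u j + 1 else u k

/-- `maxIdx u` is the largest (1-based) index of a variable dividing the monomial `u`
(`0` for the constant monomial). -/
def maxIdx {n : ℕ} (u : Fin n → ℕ) : ℕ :=
  (Finset.univ.filter fun i => 0 < u i).sup fun i : Fin n => (i : ℕ) + 1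

open Finset

variable {n : ℕ}

def IsStronglyStable (S : Set (Fin n → ℕ)) : Prop :=
  ∀ a ∈ S, ∀ i j : Fin n, j < i → 0 < a i → exch a i j ∈ S

/-- The exponents of the monomials of `𝔪 I`, where `I` is spanned by the monomials with exponents
in `S` and `𝔪 = (x₁, …, xₙ)`; the minimal generators of `I` are `S \ maxIdealMul S`. -/
def maxIdealMul (S : Set (Fin n → ℕ)) : Set (Fin n → ℕ) :=
  {u | ∃ b ∈ S, ∃ j : Fin n, u = b + Pi.single j 1}

lemma mem_iff_of_coe_eq {α : Type*} {D : Finset α} {S : Set α} {p : α → Prop}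
    (h : (D : Set α) = {a ∈ S | p a}) {a : α} : a ∈ D ↔ a ∈ S ∧ p a := by
  rw [← mem_coe, h]; rfl

lemma sum_add_single (v : Fin n → ℕ) (j : Fin n) :
    ∑ i, (v + Pi.single j 1 : Fin n → ℕ) i = ∑ i, v i + 1 := by
  simp [sum_add_distrib]

lemma maxIdx_le_iff (u : Fin n → ℕ) (i : ℕ) :
    maxIdx u ≤ i ↔ ∀ m : Fin n, 0 < u m → (m : ℕ) + 1 ≤ i := by
  simp [maxIdx, Finset.sup_le_iff]

lemma maxIdx_le (u : Fin n → ℕ) : maxIdx u ≤ n :=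
  (maxIdx_le_iff u n).2 fun m _ => m.isLt

lemma maxIdx_eq_zero_iff {u : Fin n → ℕ} : maxIdx u = 0 ↔ u = 0 := by
  rw [← Nat.le_zero, maxIdx_le_iff, funext_iff]
  simp [Nat.pos_iff_ne_zero]

lemma maxIdx_mono {u v : Fin n → ℕ} (h : v ≤ u) : maxIdx v ≤ maxIdx u :=
  (maxIdx_le_iff v _).2 fun m hm =>
    (maxIdx_le_iff u _).1 le_rfl m (hm.trans_le (h m))

lemma exists_maxIdx_eq {u : Fin n → ℕ} (hu : u ≠ 0) :
    ∃ m : Fin n, 0 < u m ∧ maxIdx u = m + 1 := by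
  obtain ⟨i, hi⟩ := Function.ne_iff.1 hu
  obtain ⟨m, hm, hmax⟩ := exists_mem_eq_sup (univ.filter fun i => 0 < u i)
    ⟨i, by simpa [Nat.pos_iff_ne_zero] using hi⟩ fun i : Fin n => (i : ℕ) + 1
  exact ⟨m, (mem_filter.1 hm).2, hmax⟩

lemma maxIdx_add_single {v : Fin n → ℕ} {j : Fin n} (h : maxIdx v ≤ j + 1) :
    maxIdx (v + Pi.single j 1) = j + 1 := by
  refine le_antisymm ((maxIdx_le_iff _ _).2 fun m hm => ?_) ?_
  · rcases eq_or_ne m j with rfl | hne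
    · rfl
    · exact (maxIdx_le_iff v _).1 h m (by simpa [hne] using hm)
  · exact le_sup (f := fun i : Fin n => (i : ℕ) + 1) (by simp)

lemma filter_maxIdx_le_of_le {D : Finset (Fin n → ℕ)} {i : ℕ} (hi : n ≤ i) :
    D.filter (fun u => maxIdx u ≤ i) = D :=
  filter_true_of_mem fun u _ => (maxIdx_le u).trans hi

lemma filter_maxIdx_le_zero {D : Finset (Fin n → ℕ)} {d : ℕ} (hD : ∀ u ∈ D, ∑ i, u i = d) :
    D.filter (fun u => maxIdx u ≤ 0) = if d = 0 then D else ∅ := by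
  rw [← filter_const]
  refine filter_congr fun u hu => ?_
  rw [Nat.le_zero, maxIdx_eq_zero_iff, ← hD u hu, sum_eq_zero_iff]
  simp [funext_iff]

lemma add_single_sub_single_mem {S : Set (Fin n → ℕ)} (hS : IsStronglyStable S)
    {b : Fin n → ℕ} (hb : b ∈ S) {j m : Fin n} (hjm : j ≤ m)
    (hm : 0 < (b + Pi.single j 1 : Fin n → ℕ) m) : b + Pi.single j 1 - Pi.single m 1 ∈ S := by
  rcases hjm.eq_or_lt with rfl | hlt
  · simpa using hb
  · have hbm : 0 < b m := by simpa [hlt.ne'] using hm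
    convert hS b hb m j hlt hbm using 1
    funext k
    simp only [exch, Pi.add_apply, Pi.sub_apply, Pi.single_apply]
    split_ifs <;> subst_vars <;> omega

section Counting

variable {S : Set (Fin n → ℕ)} {Ideg : ℕ → Finset (Fin n → ℕ)}
  (hIdeg : ∀ d : ℕ, (Ideg d : Set (Fin n → ℕ)) = {a ∈ S | ∑ i, a i = d})
include hIdeg

open scoped Classical in
lemma card_filter_maxIdealMul_succ (hideal : ∀ a ∈ S, ∀ b : Fin n → ℕ, a + b ∈ S)
    (hS : IsStronglyStable S) (t : ℕ) :
    ((Ideg (t + 1)).filter (· ∈ maxIdealMul S)).card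
      = ∑ j : Fin n, ((Ideg t).filter fun u => maxIdx u ≤ j + 1).card := by
  rw [← card_sigma]
  symm
  refine card_nbij (fun p => p.2 + Pi.single p.1 1) ?_ ?_ ?_
  · rintro ⟨j, v⟩ hv
    simp only [coe_sigma, Set.mem_sigma_iff, mem_coe, mem_filter, mem_univ, true_and,
      mem_iff_of_coe_eq (hIdeg _)] at hv ⊢
    exact ⟨⟨hideal v hv.1.1 _, by rw [sum_add_single, hv.1.2]⟩, v, hv.1.1, j, rfl⟩
  · rintro ⟨j, v⟩ hv ⟨j', v'⟩ hv' h
    simp only [coe_sigma, Set.mem_sigma_iff, mem_coe, mem_filter, mem_univ, true_and] at hv hv' h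
    obtain rfl : j = j' := by
      have := congrArg maxIdx h
      rw [maxIdx_add_single hv.2, maxIdx_add_single hv'.2] at this
      exact Fin.ext (by omega)
    obtain rfl : v = v' := add_right_cancel h
    rfl
  · intro u hu
    simp only [mem_coe, mem_filter, mem_iff_of_coe_eq (hIdeg _)] at hu
    obtain ⟨⟨-, hsum⟩, b, hb, j, rfl⟩ := hu
    obtain ⟨m, hm, hmax⟩ := exists_maxIdx_eq (u := b + Pi.single j 1) fun h => by
      simpa using congrFun h j
    have hjm : j ≤ m := by
      have := (maxIdx_le_iff _ _).1 hmax.le j (by simp)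
      exact Fin.le_iff_val_le_val.2 (by omega)
    have hle : Pi.single m 1 ≤ b + Pi.single j 1 := fun k => by
      rcases eq_or_ne k m with rfl | hk
      · rw [Pi.single_eq_same]
        exact hm
      · simp [hk]
    refine ⟨⟨m, b + Pi.single j 1 - Pi.single m 1⟩, ?_, tsub_add_cancel_of_le hle⟩
    simp only [coe_sigma, Set.mem_sigma_iff, mem_coe, mem_filter, mem_univ, true_and,
      mem_iff_of_coe_eq (hIdeg _)]
    refine ⟨⟨add_single_sub_single_mem hS hb hjm hm, ?_⟩, (maxIdx_mono tsub_le_self).trans hmax.le⟩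
    rw [← tsub_add_cancel_of_le hle, sum_add_single] at hsum
    omega

lemma card_add_sum_card_filter_maxIdx (hideal : ∀ a ∈ S, ∀ b : Fin n → ℕ, a + b ∈ S)
    (hS : IsStronglyStable S) {k K : ℕ} (hgen : ∀ a ∈ S, k < ∑ i, a i → a ∈ maxIdealMul S)
    (hK : k ≤ K) {G : Finset (Fin n → ℕ)}
    (hG : (G : Set (Fin n → ℕ)) = {a ∈ S | a ∉ maxIdealMul S}) :
    G.card + ∑ t ∈ range K, ∑ j : Fin n, ((Ideg t).filter fun u => maxIdx u ≤ j + 1).card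
      = ∑ t ∈ range (K + 1), (Ideg t).card := by
  classical
  have hG_card : G.card = ∑ t ∈ range (K + 1), ((Ideg t).filter (· ∉ maxIdealMul S)).card := by
    rw [card_eq_sum_card_fiberwise (f := fun a => ∑ i, a i) (t := range (K + 1))]
    · refine sum_congr rfl fun t _ => congrArg card (ext fun a => ?_)
      simp only [mem_filter, mem_iff_of_coe_eq hG, mem_iff_of_coe_eq (hIdeg t)]
      tauto
    · intro a ha
      rw [mem_coe, mem_iff_of_coe_eq hG] at ha
      by_contra hlt
      exact ha.2 (hgen a ha.1 (by simp at hlt; omega))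
  have hzero : (Ideg 0).filter (· ∈ maxIdealMul S) = ∅ :=
    filter_eq_empty_iff.2 fun u hu ⟨b, _, j, hbj⟩ => by
      rw [mem_iff_of_coe_eq (hIdeg 0), hbj, sum_add_single] at hu
      omega
  calc G.card + ∑ t ∈ range K, ∑ j : Fin n, ((Ideg t).filter fun u => maxIdx u ≤ j + 1).card
      = G.card + ∑ t ∈ range (K + 1), ((Ideg t).filter (· ∈ maxIdealMul S)).card := by
        rw [sum_range_succ', hzero, card_empty, add_zero]
        simp_rw [card_filter_maxIdealMul_succ hIdeg hideal hS]
    _ = ∑ t ∈ range (K + 1), (Ideg t).card := by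
        rw [hG_card, ← sum_add_distrib]
        exact sum_congr rfl fun t _ => (add_comm _ _).trans (card_filter_add_card_filter_not _)

end Counting

theorem mle_eq_of_card_generators_eq_general (n k : ℕ) (S T : Set (Fin n → ℕ))
    (hSideal : ∀ a ∈ S, ∀ b : Fin n → ℕ, a + b ∈ S)
    (hTideal : ∀ a ∈ T, ∀ b : Fin n → ℕ, a + b ∈ T)
    (hSss : ∀ a ∈ S, ∀ i j : Fin n, j < i → 0 < a i → exch a i j ∈ S)
    (hTss : ∀ a ∈ T, ∀ i j : Fin n, j < i → 0 < a i → exch a i j ∈ T)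
    (hSgen : ∀ a ∈ S, k < ∑ i, a i → ∃ b ∈ S, ∃ j : Fin n, a = b + Pi.single j 1)
    (hTgen : ∀ a ∈ T, k < ∑ i, a i → ∃ b ∈ T, ∃ j : Fin n, a = b + Pi.single j 1)
    (Ideg Jdeg : ℕ → Finset (Fin n → ℕ))
    (hIdeg : ∀ j : ℕ, (↑(Ideg j) : Set (Fin n → ℕ)) = {a ∈ S | ∑ i, a i = j})
    (hJdeg : ∀ j : ℕ, (↑(Jdeg j) : Set (Fin n → ℕ)) = {a ∈ T | ∑ i, a i = j})
    (hHilb : ∀ j : ℕ, (Ideg j).card = (Jdeg j).card)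
    (hmle : ∀ i j : ℕ, ((Jdeg j).filter fun u => maxIdx u ≤ i).card
      ≤ ((Ideg j).filter fun u => maxIdx u ≤ i).card)
    (GI GJ : Finset (Fin n → ℕ))
    (hGI : (↑GI : Set (Fin n → ℕ)) =
      {a ∈ S | ¬∃ b ∈ S, ∃ j : Fin n, a = b + Pi.single j 1})
    (hGJ : (↑GJ : Set (Fin n → ℕ)) =
      {a ∈ T | ¬∃ b ∈ T, ∃ j : Fin n, a = b + Pi.single j 1})
    (hbeta1 : GI.card = GJ.card) :
    ∀ i j : ℕ, ((Ideg j).filter fun u => maxIdx u ≤ i).card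
      = ((Jdeg j).filter fun u => maxIdx u ≤ i).card := by
  intro i j
  obtain ⟨K, hkK, hjK⟩ : ∃ K, k ≤ K ∧ j < K := ⟨max k j + 1, by omega, by omega⟩
  have hI := card_add_sum_card_filter_maxIdx hIdeg hSideal hSss hSgen hkK hGI
  have hJ := card_add_sum_card_filter_maxIdx hJdeg hTideal hTss hTgen hkK hGJ
  rw [hbeta1, sum_congr rfl fun t _ => hHilb t, ← hJ] at hI
  have hfine : ∀ j' : Fin n, ((Jdeg j).filter fun u => maxIdx u ≤ j' + 1).card
      = ((Ideg j).filter fun u => maxIdx u ≤ j' + 1).card := by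
    have hsum := (sum_eq_sum_iff_of_le fun t _ => sum_le_sum fun j' _ => hmle _ t).1
      (add_left_cancel hI).symm j (mem_range.2 hjK)
    exact fun j' => (sum_eq_sum_iff_of_le fun j' _ => hmle _ j).1 hsum j' (mem_univ _)
  rcases Nat.eq_zero_or_pos i with rfl | hi0
  · rw [filter_maxIdx_le_zero fun u hu => ((mem_iff_of_coe_eq (hIdeg j)).1 hu).2,
      filter_maxIdx_le_zero fun u hu => ((mem_iff_of_coe_eq (hJdeg j)).1 hu).2]
    split_ifs <;> simp [hHilb]
  rcases le_or_gt i n with hin | hni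
  · obtain ⟨j', rfl⟩ : ∃ j' : Fin n, i = j' + 1 := ⟨⟨i - 1, by omega⟩, by simp; omega⟩
    exact (hfine j').symm
  · rw [filter_maxIdx_le_of_le hni.le, filter_maxIdx_le_of_le hni.le, hHilb]

/-- If `I`, `J` are (proper) strongly stable monomial ideals with the same Hilbert
function, generated in degrees `≤ k`, with `m_{≤i}(J_j) ≤ m_{≤i}(I_j)` for all `i, j`,
and `I` and `J` have the same number of minimal generators (`β₁(R/I) = β₁(R/J)`),
then `m_{≤i}(I_j) = m_{≤i}(J_j)` for all `i, j`. -/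
theorem mle_eq_of_card_generators_eq (n k : ℕ) (S T : Set (Fin n → ℕ))
    (hSproper : (0 : Fin n → ℕ) ∉ S) (hTproper : (0 : Fin n → ℕ) ∉ T)
    (hSideal : ∀ a ∈ S, ∀ b : Fin n → ℕ, a + b ∈ S)
    (hTideal : ∀ a ∈ T, ∀ b : Fin n → ℕ, a + b ∈ T)
    (hSss : ∀ a ∈ S, ∀ i j : Fin n, j < i → 0 < a i → exch a i j ∈ S)
    (hTss : ∀ a ∈ T, ∀ i j : Fin n, j < i → 0 < a i → exch a i j ∈ T)
    (hSgen : ∀ a ∈ S, k < ∑ i, a i → ∃ b ∈ S, ∃ j : Fin n, a = b + Pi.single j 1)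
    (hTgen : ∀ a ∈ T, k < ∑ i, a i → ∃ b ∈ T, ∃ j : Fin n, a = b + Pi.single j 1)
    (Ideg Jdeg : ℕ → Finset (Fin n → ℕ))
    (hIdeg : ∀ j : ℕ, (↑(Ideg j) : Set (Fin n → ℕ)) = {a ∈ S | ∑ i, a i = j})
    (hJdeg : ∀ j : ℕ, (↑(Jdeg j) : Set (Fin n → ℕ)) = {a ∈ T | ∑ i, a i = j})
    (hHilb : ∀ j : ℕ, (Ideg j).card = (Jdeg j).card)
    (hmle : ∀ i j : ℕ, ((Jdeg j).filter fun u => maxIdx u ≤ i).card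
      ≤ ((Ideg j).filter fun u => maxIdx u ≤ i).card)
    (GI GJ : Finset (Fin n → ℕ))
    (hGI : (↑GI : Set (Fin n → ℕ)) =
      {a ∈ S | ¬∃ b ∈ S, ∃ j : Fin n, a = b + Pi.single j 1})
    (hGJ : (↑GJ : Set (Fin n → ℕ)) =
      {a ∈ T | ¬∃ b ∈ T, ∃ j : Fin n, a = b + Pi.single j 1})
    (hbeta1 : GI.card = GJ.card) :
    ∀ i j : ℕ, ((Ideg j).filter fun u => maxIdx u ≤ i).card
      = ((Jdeg j).filter fun u => maxIdx u ≤ i).card :=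
  mle_eq_of_card_generators_eq_general n k S T hSideal hTideal hSss hTss hSgen hTgen Ideg Jdeg hIdeg
    hJdeg hHilb hmle GI GJ hGI hGJ hbeta1
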